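/- arXiv:math/0510675 — 4 statements merged into one kernel-verified Lean document; each statement's English description precedes it below -/
import Mathlib

section
/- Let A be a reduced commutative ring with only finitely many pairwise distinct minimal prime ideals p₁, …, pₙ, and let S be the set of non zero divisors of A. Then the ideals S⁻¹p₁, …, S⁻¹pₙ of the total quotient ring Quot(A) = S⁻¹A are pairwise distinct maximal ideals, every prime ideal of S⁻¹A equals S⁻¹pᵢ for some i, and S⁻¹p₁ ∩ … ∩ S⁻¹pₙ = 0. -/
/-!
In a reduced ring the zero divisors are exactly the union of the minimal primes. A prime of
`S⁻¹A` comes from a prime of `A` avoiding `S`, i.e. contained in that finite union, so by prime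
avoidance it lies in, hence equals, a minimal prime. Thus every prime of `S⁻¹A` is one of the
`S⁻¹pᵢ` and is minimal, so `S⁻¹A` has dimension zero; and the intersection of the `S⁻¹pᵢ` is the
nilradical of the reduced ring `S⁻¹A`.
-/

namespace IsReduced

variable {A : Type*} [CommRing A] [IsReduced A]

theorem compl_nonZeroDivisors_eq_biUnion_minimalPrimes :
    (nonZeroDivisors A : Set A)ᶜ = ⋃ p ∈ minimalPrimes A, (p : Set A) := by
  rw [minimalPrimes, Ideal.iUnion_minimalPrimes, Ideal.radical_bot_of_isReduced]
  ext x
  simp [mem_nonZeroDivisors_iff_right, mul_comm x, and_comm]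

theorem mem_minimalPrimes_of_disjoint_nonZeroDivisors (hfin : (minimalPrimes A).Finite)
    {q : Ideal A} (hq : q.IsPrime) (hdisj : Disjoint (q : Set A) (nonZeroDivisors A)) :
    q ∈ minimalPrimes A := by
  have hsub : (q : Set A) ⊆ ⋃ p ∈ minimalPrimes A, (p : Set A) :=
    compl_nonZeroDivisors_eq_biUnion_minimalPrimes (A := A) ▸ hdisj.subset_compl_right
  obtain ⟨p, hp, hqp⟩ := (Ideal.subset_union_prime_finite (f := id) hfin ⊥ ⊥
    fun p hp _ _ => hp.1.1).mp hsub
  exact (le_antisymm hqp (hp.2 ⟨hq, bot_le⟩ hqp)) ▸ hp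

end IsReduced

namespace IsLocalization

variable {A : Type*} [CommRing A] {L : Type*} [CommRing L] [Algebra A L]

theorem mem_minimalPrimes_iff_under (S : Submonoid A) [IsLocalization S L] {Q : Ideal L} :
    Q ∈ minimalPrimes L ↔ Q.under A ∈ minimalPrimes A := by
  have := minimalPrimes_map S L (⊥ : Ideal A)
  rw [Ideal.map_bot] at this
  exact Set.ext_iff.mp this Q

end IsLocalization

namespace IsReduced

variable {A : Type*} [CommRing A] [IsReduced A] (L : Type*) [CommRing L] [Algebra A L]
  [IsLocalization (nonZeroDivisors A) L]

theorem mem_minimalPrimes_of_isPrime_of_isLocalization (hfin : (minimalPrimes A).Finite)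
    {Q : Ideal L} (hQ : Q.IsPrime) : Q ∈ minimalPrimes L := by
  obtain ⟨hQA, hdisj⟩ :=
    (IsLocalization.isPrime_iff_isPrime_disjoint (nonZeroDivisors A) L Q).mp hQ
  exact (IsLocalization.mem_minimalPrimes_iff_under (nonZeroDivisors A)).mpr
    (mem_minimalPrimes_of_disjoint_nonZeroDivisors hfin hQA hdisj.symm)

theorem krullDimLE_zero_of_isLocalization (hfin : (minimalPrimes A).Finite) :
    Ring.KrullDimLE 0 L := by
  refine Ring.krullDimLE_zero_iff_forall_minimalPrimes_isMaximal.mpr fun Q hQ => ?_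
  obtain ⟨M, hM, hQM⟩ := Ideal.exists_le_maximal Q hQ.1.1.ne_top
  have hMQ : M ≤ Q := (mem_minimalPrimes_of_isPrime_of_isLocalization L hfin hM.isPrime).2 hQ.1 hQM
  exact le_antisymm hQM hMQ ▸ hM

end IsReduced

/-- Let `A` be a reduced commutative ring whose minimal primes are exactly the
pairwise distinct `p 1, …, p n`, and let `S` be the set of non zero divisors of
`A`.  Then the extensions `S⁻¹p i` to the total quotient ring `S⁻¹A` are
pairwise distinct maximal ideals, every prime ideal of `S⁻¹A` is one of them,
and their intersection is zero. -/
theorem stmt_2 {A : Type*} [CommRing A] [IsReduced A] {n : ℕ} (p : Fin n → Ideal A)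
    (hinj : Function.Injective p)
    (hmin : ∀ i, p i ∈ minimalPrimes A)
    (hall : ∀ q ∈ minimalPrimes A, ∃ i, q = p i) :
    Function.Injective (fun i =>
        (p i).map (algebraMap A (Localization (nonZeroDivisors A)))) ∧
    (∀ i, ((p i).map (algebraMap A (Localization (nonZeroDivisors A)))).IsMaximal) ∧
    (∀ q : Ideal (Localization (nonZeroDivisors A)), q.IsPrime →
        ∃ i, q = (p i).map (algebraMap A (Localization (nonZeroDivisors A)))) ∧
    (⨅ i, (p i).map (algebraMap A (Localization (nonZeroDivisors A)))) = ⊥ := by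
  set L := Localization (nonZeroDivisors A)
  have hfin : (minimalPrimes A).Finite :=
    (Set.finite_range p).subset fun q hq => (hall q hq).imp fun _ h => h.symm
  have : Ring.KrullDimLE 0 L := IsReduced.krullDimLE_zero_of_isLocalization L hfin
  have hdisj i : Disjoint (nonZeroDivisors A : Set A) (p i) :=
    (Ideal.disjoint_nonZeroDivisors_of_mem_minimalPrimes (hmin i)).symm
  have hunder i : ((p i).map (algebraMap A L)).under A = p i :=
    IsLocalization.under_map_of_isPrime_disjoint _ L (hmin i).1.1 (hdisj i)
  have hclass (q : Ideal L) (hq : q.IsPrime) : ∃ i, q = (p i).map (algebraMap A L) := by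
    obtain ⟨i, hi⟩ := hall _ ((IsLocalization.mem_minimalPrimes_iff_under
      (nonZeroDivisors A)).mp (Ideal.mem_minimalPrimes_of_krullDimLE_zero q))
    exact ⟨i, hi ▸ (IsLocalization.map_under (nonZeroDivisors A) L q).symm⟩
  refine ⟨fun i j hij => hinj ?_, fun i => ?_, hclass, ?_⟩
  · rw [← hunder i, ← hunder j]
    exact congrArg (Ideal.under A) hij
  · exact (IsLocalization.isPrime_of_isPrime_disjoint _ L _ (hmin i).1.1 (hdisj i)).isMaximal'
  · refine le_bot_iff.mp ?_
    rw [← Ideal.zero_eq_bot, ← nilradical_eq_zero L, nilradical_eq_sInf]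
    refine le_sInf fun q hq => ?_
    obtain ⟨i, rfl⟩ := hclass q hq
    exact iInf_le _ i
end

section
/- Let A be a reduced commutative ring with only finitely many pairwise distinct minimal prime ideals p₁, …, pₙ, and let S be the set of non zero divisors of A. Then for each i ∈ {1, …, n} there is a canonical ring isomorphism S⁻¹A / S⁻¹pᵢ ≅ qf(A/pᵢ), where qf(A/pᵢ) denotes the quotient field (field of fractions) of the integral domain A/pᵢ. -/
/-!
Non-zero-divisors avoid every minimal prime `p`, so `A → qf(A/p)` extends to `S⁻¹A`, with kernel
`S⁻¹p`. For surjectivity it suffices that every `b ∉ p` divides, modulo `p`, an element of `S`.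
By prime avoidance pick `e ∉ p` lying in all other minimal primes and `f ∈ p` lying in none of
them; then `b * e + f` lies in no minimal prime, so it is a non-zero-divisor because `A` is
reduced, and it is congruent to `b * e` modulo `p`.
-/

namespace IsLocalization

variable {A : Type*} [CommRing A] {M : Submonoid A} (K : Type*) [CommRing K] [Algebra A K]
  [IsLocalization M K] {p : Ideal A} [p.IsPrime]

theorem isUnit_algebraMap_mk_of_le_primeCompl (hM : M ≤ p.primeCompl) (s : M) :
    IsUnit ((algebraMap (A ⧸ p) (FractionRing (A ⧸ p))).comp (Ideal.Quotient.mk p) s) :=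
  IsUnit.mk0 _ <| by
    simpa [IsFractionRing.to_map_eq_zero_iff, Ideal.Quotient.eq_zero_iff_mem]
      using hM s.2

noncomputable def liftFractionRingQuotient (hM : M ≤ p.primeCompl) :
    K →+* FractionRing (A ⧸ p) :=
  lift (M := M) (isUnit_algebraMap_mk_of_le_primeCompl hM)

theorem liftFractionRingQuotient_algebraMap (hM : M ≤ p.primeCompl) (a : A) :
    liftFractionRingQuotient K hM (algebraMap A K a) =
      algebraMap (A ⧸ p) (FractionRing (A ⧸ p)) (Ideal.Quotient.mk p a) :=
  lift_eq _ a

theorem liftFractionRingQuotient_mk'_eq_iff (hM : M ≤ p.primeCompl) (a : A) (s : M)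
    (y : FractionRing (A ⧸ p)) :
    liftFractionRingQuotient K hM (mk' K a s) = y ↔
      algebraMap (A ⧸ p) (FractionRing (A ⧸ p)) (Ideal.Quotient.mk p a) =
        algebraMap (A ⧸ p) (FractionRing (A ⧸ p)) (Ideal.Quotient.mk p s) * y :=
  lift_mk'_spec _ _ _ _

theorem ker_liftFractionRingQuotient (hM : M ≤ p.primeCompl) :
    RingHom.ker (liftFractionRingQuotient K hM) = p.map (algebraMap A K) := by
  apply le_antisymm
  · intro x hx
    obtain ⟨a, s, rfl⟩ := exists_mk'_eq M x
    have ha : a ∈ p := by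
      rwa [RingHom.mem_ker, liftFractionRingQuotient_mk'_eq_iff, mul_zero,
        IsFractionRing.to_map_eq_zero_iff, Ideal.Quotient.eq_zero_iff_mem] at hx
    rw [mk'_eq_mul_mk'_one]
    exact Ideal.mul_mem_right _ _ (Ideal.mem_map_of_mem _ ha)
  · rw [Ideal.map_le_iff_le_comap]
    intro a ha
    rw [Ideal.mem_comap, RingHom.mem_ker, liftFractionRingQuotient_algebraMap,
      Ideal.Quotient.eq_zero_iff_mem.mpr ha, map_zero]

theorem liftFractionRingQuotient_surjective (hM : M ≤ p.primeCompl)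
    (h : ∀ b ∉ p, ∃ c, ∃ t ∈ M, b * c - t ∈ p) :
    Function.Surjective (liftFractionRingQuotient K hM) := by
  intro y
  obtain ⟨α, β, hβ, rfl⟩ := IsFractionRing.div_surjective (A := A ⧸ p) y
  obtain ⟨a, rfl⟩ := Ideal.Quotient.mk_surjective α
  obtain ⟨b, rfl⟩ := Ideal.Quotient.mk_surjective β
  obtain ⟨c, t, ht, hbct⟩ :=
    h b fun hb => nonZeroDivisors.ne_zero hβ (Ideal.Quotient.eq_zero_iff_mem.mpr hb)
  refine ⟨mk' K (a * c) ⟨t, ht⟩, (liftFractionRingQuotient_mk'_eq_iff K hM _ _ _).mpr ?_⟩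
  have hb := IsFractionRing.to_map_ne_zero_of_mem_nonZeroDivisors (K := FractionRing (A ⧸ p)) hβ
  rw [← Ideal.Quotient.eq.mpr hbct]
  simp only [map_mul]
  field_simp

noncomputable def quotientMapEquivFractionRing (hM : M ≤ p.primeCompl)
    (h : ∀ b ∉ p, ∃ c, ∃ t ∈ M, b * c - t ∈ p) :
    K ⧸ p.map (algebraMap A K) ≃+* FractionRing (A ⧸ p) :=
  (Ideal.quotEquivOfEq (ker_liftFractionRingQuotient K hM).symm).trans
    (RingHom.quotientKerEquivOfSurjective (liftFractionRingQuotient_surjective K hM h))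

theorem quotientMapEquivFractionRing_mk_algebraMap (hM : M ≤ p.primeCompl)
    (h : ∀ b ∉ p, ∃ c, ∃ t ∈ M, b * c - t ∈ p) (a : A) :
    quotientMapEquivFractionRing K hM h (Ideal.Quotient.mk _ (algebraMap A K a)) =
      algebraMap (A ⧸ p) (FractionRing (A ⧸ p)) (Ideal.Quotient.mk p a) :=
  liftFractionRingQuotient_algebraMap K hM a

end IsLocalization

section MinimalPrimes

variable {A : Type*} [CommRing A]

theorem mem_nonZeroDivisors_of_forall_notMem_minimalPrimes [IsReduced A] {t : A}
    (ht : ∀ q ∈ minimalPrimes A, t ∉ q) : t ∈ nonZeroDivisors A := by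
  refine mem_nonZeroDivisors_iff_right.mpr fun x hxt => ?_
  have hx : x ∈ sInf (minimalPrimes A) := Ideal.mem_sInf.mpr fun q hq =>
    ((IsMinimalPrime.isPrime hq).mem_or_mem (hxt ▸ q.zero_mem)).resolve_right (ht q hq)
  rwa [minimalPrimes, Ideal.sInf_minimalPrimes, Ideal.radical_bot_of_isReduced,
    Ideal.mem_bot] at hx

theorem eq_of_le_of_mem_minimalPrimes {p q : Ideal A} (hp : p ∈ minimalPrimes A)
    (hq : q ∈ minimalPrimes A) (hle : q ≤ p) : q = p :=
  le_antisymm hle (hp.2 hq.1 hle)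

theorem exists_notMem_mem_of_ne_minimalPrimes (hfin : (minimalPrimes A).Finite) {p : Ideal A}
    (hp : p ∈ minimalPrimes A) : ∃ e ∉ p, ∀ q ∈ minimalPrimes A, q ≠ p → e ∈ q := by
  classical
  obtain ⟨e, he, hep⟩ : ∃ e ∈ (hfin.toFinset.erase p).inf id, e ∉ p := by
    by_contra! h
    obtain ⟨q, hq, hqp⟩ := ((IsMinimalPrime.isPrime hp).inf_le' (f := id)).mp h
    rw [Finset.mem_erase, Set.Finite.mem_toFinset] at hq
    exact hq.1 (eq_of_le_of_mem_minimalPrimes hp hq.2 hqp)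
  refine ⟨e, hep, fun q hq hqp => SetLike.le_def.mp (Finset.inf_le (f := id) ?_) he⟩
  simp [hq, hqp]

theorem exists_mem_notMem_of_ne_minimalPrimes (hfin : (minimalPrimes A).Finite) {p : Ideal A}
    (hp : p ∈ minimalPrimes A) : ∃ f ∈ p, ∀ q ∈ minimalPrimes A, q ≠ p → f ∉ q := by
  classical
  have hprime : ∀ q ∈ hfin.toFinset.erase p, q ≠ p → q ≠ p → q.IsPrime := fun q hq _ _ =>
    IsMinimalPrime.isPrime (hfin.mem_toFinset.mp (Finset.mem_of_mem_erase hq))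
  obtain ⟨f, hf, hfq⟩ := Set.not_subset.mp <|
    (Ideal.subset_union_prime (f := id) p p hprime).not.mpr <| by
      rintro ⟨q, hq, hpq⟩
      rw [Finset.mem_erase, Set.Finite.mem_toFinset] at hq
      exact hq.1 (eq_of_le_of_mem_minimalPrimes hq.2 hp hpq).symm
  exact ⟨f, hf, fun q hq hqp hfq' => hfq (Set.mem_biUnion (by simp [hq, hqp]) hfq')⟩

theorem exists_mul_sub_mem_of_notMem_minimalPrimes [IsReduced A]
    (hfin : (minimalPrimes A).Finite) {p : Ideal A} (hp : p ∈ minimalPrimes A) {b : A}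
    (hb : b ∉ p) : ∃ c, ∃ t ∈ nonZeroDivisors A, b * c - t ∈ p := by
  obtain ⟨e, hep, he⟩ := exists_notMem_mem_of_ne_minimalPrimes hfin hp
  obtain ⟨f, hfp, hf⟩ := exists_mem_notMem_of_ne_minimalPrimes hfin hp
  refine ⟨e, b * e + f, mem_nonZeroDivisors_of_forall_notMem_minimalPrimes fun q hq hbef => ?_,
    by simpa using p.neg_mem hfp⟩
  obtain rfl | hqp := eq_or_ne q p
  · exact ((IsMinimalPrime.isPrime hp).mem_or_mem ((q.add_mem_iff_left hfp).mp hbef)).elim hb hep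
  · exact hf q hq hqp ((q.add_mem_iff_right (q.mul_mem_left b (he q hq hqp))).mp hbef)

end MinimalPrimes

theorem stmt_3_general {A : Type*} [CommRing A] [IsReduced A] {n : ℕ} (p : Fin n → Ideal A)
    (hmin : ∀ i, p i ∈ minimalPrimes A)
    (hall : ∀ q ∈ minimalPrimes A, ∃ i, q = p i) :
    ∀ i, ∃ e : (Localization (nonZeroDivisors A) ⧸
          (p i).map (algebraMap A (Localization (nonZeroDivisors A)))) ≃+*
          FractionRing (A ⧸ p i),
      ∀ a : A,
        e (Ideal.Quotient.mk _ (algebraMap A (Localization (nonZeroDivisors A)) a)) =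
          algebraMap (A ⧸ p i) (FractionRing (A ⧸ p i)) (Ideal.Quotient.mk (p i) a) := by
  have hfin : (minimalPrimes A).Finite :=
    (Set.finite_range p).subset fun q hq => (hall q hq).imp fun _ hi => hi.symm
  intro i
  have := IsMinimalPrime.isPrime (hmin i)
  have hS : nonZeroDivisors A ≤ (p i).primeCompl := fun s hs hsp =>
    notMem_nonZeroDivisors_of_mem_mem_minimalPrimes hsp (hmin i) hs
  have hdvd (b) (hb : b ∉ p i) := exists_mul_sub_mem_of_notMem_minimalPrimes hfin (hmin i) hb
  exact ⟨IsLocalization.quotientMapEquivFractionRing _ hS hdvd,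
    IsLocalization.quotientMapEquivFractionRing_mk_algebraMap _ hS hdvd⟩

/-- Let `A` be a reduced commutative ring whose minimal primes are exactly the
pairwise distinct `p 1, …, p n`, and let `S` be the set of non zero divisors of
`A`.  Then for each `i` there is a canonical ring isomorphism
`S⁻¹A / S⁻¹(p i) ≅ qf(A / p i)`, compatible with the natural maps from `A`. -/
theorem stmt_3 {A : Type*} [CommRing A] [IsReduced A] {n : ℕ} (p : Fin n → Ideal A)
    (hinj : Function.Injective p)
    (hmin : ∀ i, p i ∈ minimalPrimes A)
    (hall : ∀ q ∈ minimalPrimes A, ∃ i, q = p i) :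
    ∀ i, ∃ e : (Localization (nonZeroDivisors A) ⧸
          (p i).map (algebraMap A (Localization (nonZeroDivisors A)))) ≃+*
          FractionRing (A ⧸ p i),
      ∀ a : A,
        e (Ideal.Quotient.mk _ (algebraMap A (Localization (nonZeroDivisors A)) a)) =
          algebraMap (A ⧸ p i) (FractionRing (A ⧸ p i)) (Ideal.Quotient.mk (p i) a) :=
  stmt_3_general p hmin hall
end

section
/- Let A be a reduced commutative ring with only finitely many pairwise distinct minimal prime ideals p₁, …, pₙ. Then there is a canonical ring isomorphism Quot(A) ≅ qf(A/p₁) × ⋯ × qf(A/pₙ), whose i-th component is induced by the natural maps A → A/pᵢ → qf(A/pᵢ). -/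
/-!
If `p : ι → Ideal A` is a finite family of pairwise incomparable primes with `⨅ i, p i = ⊥`,
then `∏ i, qf(A/pᵢ)` is already the total ring of fractions of `A`. A prime containing a finite
intersection of ideals contains one of them, so there is `cᵢ ∈ ⋂_{j ≠ i} pⱼ \ pᵢ`. An element
outside every `pᵢ` is a non-zero-divisor because the intersection is trivial, and conversely
`s cᵢ = 0` for `s ∈ pᵢ`, so the non-zero-divisors are exactly the elements avoiding every `pᵢ`.
Finally, `(aᵢ / bᵢ)ᵢ` is the image of `(∑ cⱼ aⱼ) / (∑ cⱼ bⱼ)`, since modulo `pᵢ` only the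
`i`-th summand survives. In a reduced ring the finitely many minimal primes form such a family.
-/

open scoped nonZeroDivisors

namespace Ideal

variable {A : Type*} [CommRing A]

theorem algebraMap_fractionRing_quotient_eq_zero_iff (P : Ideal A) [P.IsPrime] {a : A} :
    algebraMap A (FractionRing (A ⧸ P)) a = 0 ↔ a ∈ P :=
  (IsFractionRing.to_map_eq_zero_iff (R := A ⧸ P)).trans Quotient.eq_zero_iff_mem

theorem iInf_eq_bot_of_forall_minimalPrimes [IsReduced A] {ι : Type*} {p : ι → Ideal A}
    (hall : ∀ q ∈ minimalPrimes A, ∃ i, q = p i) : ⨅ i, p i = ⊥ := by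
  refine le_bot_iff.mp (le_of_le_of_eq (le_sInf fun q hq => ?_)
    (sInf_minimalPrimes.trans (nilradical_eq_zero A)))
  obtain ⟨i, rfl⟩ := hall q hq
  exact iInf_le p i

section PrimeFamily

variable {ι : Type*} {p : ι → Ideal A} [∀ i, (p i).IsPrime]

theorem exists_notMem_forall_ne_mem [Finite ι] (hp : ∀ i j, p i ≤ p j → i = j) (i : ι) :
    ∃ c, c ∉ p i ∧ ∀ j ≠ i, c ∈ p j := by
  classical
  have := Fintype.ofFinite ι
  by_contra! h
  have hle : (Finset.univ.erase i).inf p ≤ p i := fun c hc => by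
    by_contra hci
    obtain ⟨j, hji, hcj⟩ := h c hci
    exact hcj (Finset.inf_le (f := p) (Finset.mem_erase.mpr ⟨hji, Finset.mem_univ j⟩) hc)
  obtain ⟨j, hj, hji⟩ := (IsPrime.inf_le' inferInstance).mp hle
  exact (Finset.mem_erase.mp hj).1 (hp j i hji)

theorem mem_nonZeroDivisors_of_forall_notMem (hbot : ⨅ i, p i = ⊥) {s : A}
    (hs : ∀ i, s ∉ p i) : s ∈ A⁰ := by
  refine mem_nonZeroDivisors_iff_right.mpr fun x hx => ?_
  have hmem : x ∈ ⨅ i, p i := Submodule.mem_iInf p |>.mpr fun i =>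
    (IsPrime.mul_mem_right_iff (hs i)).mp (hx ▸ (p i).zero_mem)
  rwa [hbot, Submodule.mem_bot] at hmem

theorem notMem_of_mem_nonZeroDivisors [Finite ι] (hbot : ⨅ i, p i = ⊥)
    (hp : ∀ i j, p i ≤ p j → i = j) {s : A} (hs : s ∈ A⁰) (i : ι) : s ∉ p i := by
  intro hsi
  obtain ⟨c, hci, hcj⟩ := exists_notMem_forall_ne_mem hp i
  have hsc : s * c ∈ ⨅ j, p j := Submodule.mem_iInf p |>.mpr fun j => by
    rcases eq_or_ne j i with rfl | hji
    · exact mul_mem_right c _ hsi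
    · exact mul_mem_left _ s (hcj j hji)
  rw [hbot, Submodule.mem_bot, mul_comm] at hsc
  exact hci (mul_right_mem_nonZeroDivisors_eq_zero_iff hs |>.mp hsc ▸ (p i).zero_mem)

theorem exists_pi_fractionRing_mul_algebraMap_eq [Finite ι] (hbot : ⨅ i, p i = ⊥)
    (hp : ∀ i j, p i ≤ p j → i = j) (z : ∀ i, FractionRing (A ⧸ p i)) :
    ∃ x : A × A⁰, z * algebraMap A _ x.2 = algebraMap A _ x.1 := by
  classical
  have := Fintype.ofFinite ι
  have hfrac : ∀ i, ∃ a b : A, b ∉ p i ∧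
      z i * algebraMap A (FractionRing (A ⧸ p i)) b = algebraMap A _ a := by
    intro i
    obtain ⟨⟨a, b⟩, hab⟩ := IsLocalization.surj (A ⧸ p i)⁰ (z i)
    obtain ⟨a, rfl⟩ := Quotient.mk_surjective a
    obtain ⟨b', hb'⟩ := Quotient.mk_surjective (b : A ⧸ p i)
    refine ⟨a, b', fun hb => nonZeroDivisors.ne_zero b.2 ?_, by rwa [← hb'] at hab⟩
    rwa [← hb', Quotient.eq_zero_iff_mem]
  choose a b hb hab using hfrac
  choose c hc hc' using exists_notMem_forall_ne_mem hp
  have hsum : ∀ (f : ι → A) (i : ι), algebraMap A (FractionRing (A ⧸ p i)) (∑ j, c j * f j) =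
      algebraMap A _ (c i * f i) := fun f i => by
    rw [map_sum, Finset.sum_eq_single_of_mem i (Finset.mem_univ i)]
    intro j _ hji
    exact (algebraMap_fractionRing_quotient_eq_zero_iff (p i)).mpr
      (mul_mem_right _ _ (hc' j i (Ne.symm hji)))
  have hS : ∑ j, c j * b j ∈ A⁰ := mem_nonZeroDivisors_of_forall_notMem hbot fun i h => by
    have h' := (algebraMap_fractionRing_quotient_eq_zero_iff (p i)).mpr h
    rw [hsum, algebraMap_fractionRing_quotient_eq_zero_iff] at h'
    exact hb i ((IsPrime.mul_mem_left_iff (hc i)).mp h')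
  refine ⟨(∑ j, c j * a j, ⟨_, hS⟩), funext fun i => ?_⟩
  change z i * algebraMap A _ (∑ j, c j * b j) = algebraMap A _ (∑ j, c j * a j)
  rw [hsum, hsum, map_mul, map_mul, ← hab, mul_left_comm]

theorem isLocalization_pi_fractionRing [Finite ι] (hbot : ⨅ i, p i = ⊥)
    (hp : ∀ i j, p i ≤ p j → i = j) : IsLocalization A⁰ (∀ i, FractionRing (A ⧸ p i)) where
  map_units s := Pi.isUnit_iff.mpr fun i => IsUnit.mk0 _ <|
    (algebraMap_fractionRing_quotient_eq_zero_iff (p i)).not.mpr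
      (notMem_of_mem_nonZeroDivisors hbot hp s.2 i)
  surj := exists_pi_fractionRing_mul_algebraMap_eq hbot hp
  exists_of_eq {x y} hxy := by
    refine ⟨1, congrArg _ (sub_eq_zero.mp ?_)⟩
    have hmem : x - y ∈ ⨅ i, p i := Submodule.mem_iInf p |>.mpr fun i =>
      (algebraMap_fractionRing_quotient_eq_zero_iff (p i)).mp
        (by rw [map_sub, sub_eq_zero]; exact congrFun hxy i)
    rwa [hbot, Submodule.mem_bot] at hmem

end PrimeFamily

end Ideal

/-- Let `A` be a reduced commutative ring whose minimal primes are exactly the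
pairwise distinct `p 1, …, p n`.  Then there is a canonical ring isomorphism
`Quot(A) ≅ qf(A/p 1) × ⋯ × qf(A/p n)` whose `i`-th component is induced by the
natural maps `A → A/p i → qf(A/p i)`. -/
theorem stmt_4 {A : Type*} [CommRing A] [IsReduced A] {n : ℕ} (p : Fin n → Ideal A)
    (hinj : Function.Injective p)
    (hmin : ∀ i, p i ∈ minimalPrimes A)
    (hall : ∀ q ∈ minimalPrimes A, ∃ i, q = p i) :
    ∃ e : Localization (nonZeroDivisors A) ≃+* (∀ i, FractionRing (A ⧸ p i)),
      ∀ (a : A) (i : Fin n),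
        e (algebraMap A (Localization (nonZeroDivisors A)) a) i =
          algebraMap (A ⧸ p i) (FractionRing (A ⧸ p i)) (Ideal.Quotient.mk (p i) a) := by
  have hprime : ∀ i, (p i).IsPrime := fun i => (hmin i).1.1
  have hp : ∀ i j, p i ≤ p j → i = j := fun i j h =>
    hinj (le_antisymm h ((hmin j).2 (hmin i).1 h))
  have := Ideal.isLocalization_pi_fractionRing (Ideal.iInf_eq_bot_of_forall_minimalPrimes hall) hp
  let e := IsLocalization.algEquiv A⁰ (Localization A⁰) (∀ i, FractionRing (A ⧸ p i))
  exact ⟨e.toRingEquiv, fun a i => congrFun (e.commutes a) i⟩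
end

section
/- Let A be a reduced commutative ring with only finitely many pairwise distinct minimal prime ideals p₁, …, pₙ, and let B be a subring of A such that: (1) for each i, the canonical embedding of fields qf(B/(pᵢ ∩ B)) → qf(A/pᵢ) induced by the inclusion B/(pᵢ ∩ B) ⊆ A/pᵢ is surjective (hence an isomorphism); (2) pᵢ ∩ B ⊄ pⱼ ∩ B for all i ≠ j; and (3) every minimal prime ideal of B is of the form pᵢ ∩ B for some i. Then every non zero divisor of B is a non zero divisor of A, and the induced canonical ring homomorphism Quot(B) → Quot(A) between the total quotient rings is an isomorphism. -/
/-!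
Since `A` is reduced, its non zero divisors are the elements avoiding its minimal primes `p i`.
A non zero divisor of `B` avoids the minimal primes of `B`, which by (2) and (3) are the
contractions `p i ∩ B`; this gives the first claim. For the second it suffices that every
`a ∈ A` is a fraction `b / s` with `b, s ∈ B` and `s` a non zero divisor. Condition (1) provides
such fractions `bᵢ / sᵢ` modulo each `p i` separately. Since `p i ∩ B` is prime and contains
no other `p j ∩ B`, it does not contain their intersection, which yields `eᵢ ∈ B` lying in every
`p j` except `p i`. Then `(∑ eᵢ bᵢ) / (∑ eᵢ sᵢ)` is correct modulo every `p i`, hence in `A`.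
-/

open scoped nonZeroDivisors

section Reduced

variable {R : Type*} [CommRing R] [IsReduced R]

theorem eq_zero_of_forall_mem_minimalPrimes {x : R} (hx : ∀ q ∈ minimalPrimes R, x ∈ q) :
    x = 0 := by
  have hmem : x ∈ sInf (minimalPrimes R) := Submodule.mem_sInf.mpr hx
  rw [minimalPrimes, Ideal.sInf_minimalPrimes] at hmem
  simpa using (nilradical_eq_zero R ▸ hmem : x ∈ (0 : Ideal R))

theorem mem_nonZeroDivisors_iff_forall_notMem_minimalPrimes {x : R} :
    x ∈ R⁰ ↔ ∀ q ∈ minimalPrimes R, x ∉ q := by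
  refine ⟨fun hx q hq hxq ↦ notMem_nonZeroDivisors_of_mem_mem_minimalPrimes hxq hq hx, fun h ↦ ?_⟩
  refine mem_nonZeroDivisors_iff_right.mpr fun z hz ↦ eq_zero_of_forall_mem_minimalPrimes ?_
  intro q hq
  exact (hq.isPrime.mem_or_mem (hz ▸ q.zero_mem)).resolve_right (h q hq)

end Reduced

theorem Ideal.exists_notMem_forall_mem_of_not_le {R ι : Type*} [CommRing R] [Fintype ι]
    [DecidableEq ι] (q : ι → Ideal R) (i : ι) [(q i).IsPrime] (h : ∀ j ≠ i, ¬ q j ≤ q i) :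
    ∃ e, e ∉ q i ∧ ∀ j ≠ i, e ∈ q j := by
  have hnle : ¬ (Finset.univ.erase i).inf q ≤ q i := by
    rw [Ideal.IsPrime.inf_le' ‹_›]
    rintro ⟨j, hj, hle⟩
    exact h j (Finset.ne_of_mem_erase hj) hle
  obtain ⟨e, he, hei⟩ := SetLike.not_le_iff_exists.mp hnle
  exact ⟨e, hei, fun j hj ↦
    Submodule.mem_finsetInf.mp he j (Finset.mem_erase.mpr ⟨hj, Finset.mem_univ j⟩)⟩

theorem Ideal.sum_mul_mem_iff {R ι : Type*} [CommRing R] [Fintype ι] (P : Ideal R)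
    {e : ι → R} (f : ι → R) {k : ι} (he : ∀ j ≠ k, e j ∈ P) :
    ∑ j, e j * f j ∈ P ↔ e k * f k ∈ P := by
  classical
  rw [← Finset.add_sum_erase _ _ (Finset.mem_univ k)]
  refine P.add_mem_iff_left (P.sum_mem fun j hj ↦ P.mul_mem_right _ (he j ?_))
  exact Finset.ne_of_mem_erase hj

theorem Ideal.mul_sub_mem_iff_fractionRing {A : Type*} [CommRing A] (P : Ideal A) [P.IsPrime]
    (a s b : A) :
    algebraMap (A ⧸ P) (FractionRing (A ⧸ P)) (Ideal.Quotient.mk P a) *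
        algebraMap (A ⧸ P) (FractionRing (A ⧸ P)) (Ideal.Quotient.mk P s) =
      algebraMap (A ⧸ P) (FractionRing (A ⧸ P)) (Ideal.Quotient.mk P b) ↔
    s * a - b ∈ P := by
  rw [← map_mul, (IsFractionRing.injective _ _).eq_iff, ← map_mul, Ideal.Quotient.eq, mul_comm]

theorem IsFractionRing.of_forall_exists_mul_eq_algebraMap {R A K : Type*} [CommRing R] [CommRing A]
    [CommRing K] [Algebra R A] [Algebra R K] [Algebra A K] [IsScalarTower R A K]
    [IsFractionRing A K] (hinj : Function.Injective (algebraMap R A))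
    (hnzd : ∀ r ∈ R⁰, algebraMap R A r ∈ A⁰)
    (hfrac : ∀ a : A, ∃ s ∈ R⁰, ∃ r, algebraMap R A s * a = algebraMap R A r) :
    IsFractionRing R K := by
  have hK : Function.Injective (algebraMap R K) := by
    rw [IsScalarTower.algebraMap_eq R A K]
    exact (IsFractionRing.injective A K).comp hinj
  refine (isLocalization_iff _ _).mpr ⟨fun s ↦ ?_, fun z ↦ ?_, fun h ↦ ⟨1, by rw [hK h]⟩⟩
  · rw [IsScalarTower.algebraMap_apply R A K]
    exact IsLocalization.map_units K (⟨_, hnzd s s.2⟩ : A⁰)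
  · obtain ⟨⟨a, t⟩, rfl⟩ := IsLocalization.mk'_surjective A⁰ z
    obtain ⟨s₁, hs₁, r₁, ha⟩ := hfrac a
    obtain ⟨s₂, hs₂, r₂, ht⟩ := hfrac t
    have hr₂ : r₂ ∈ R⁰ := mem_nonZeroDivisors_of_injective hinj (ht ▸ mul_mem (hnzd s₂ hs₂) t.2)
    refine ⟨⟨r₁ * s₂, ⟨s₁ * r₂, mul_mem hs₁ hr₂⟩⟩, ?_⟩
    have hspec := IsLocalization.mk'_spec K a t
    simp only [IsScalarTower.algebraMap_apply R A K, map_mul, ← ha, ← ht]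
    linear_combination
      (algebraMap A K (algebraMap R A s₁) * algebraMap A K (algebraMap R A s₂)) * hspec

theorem Ideal.mem_minimalPrimes_of_not_le {R ι : Type*} [CommRing R] (q : ι → Ideal R)
    (hq : ∀ i, (q i).IsPrime) (hincomp : ∀ i j, i ≠ j → ¬ q i ≤ q j)
    (hall : ∀ Q ∈ minimalPrimes R, ∃ i, Q = q i) (i : ι) : q i ∈ minimalPrimes R := by
  obtain ⟨Q, hQ, hQle⟩ := Ideal.exists_minimalPrimes_le (I := ⊥) (J := q i) bot_le
  obtain ⟨j, rfl⟩ := hall Q hQ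
  obtain rfl | hji := eq_or_ne j i
  · exact hQ
  · exact absurd hQle (hincomp j i hji)

namespace Subring

variable {A ι : Type*} [CommRing A] {p : ι → Ideal A} (B : Subring A)

theorem coe_mem_nonZeroDivisors [IsReduced A] (hall : ∀ q ∈ minimalPrimes A, ∃ i, q = p i)
    (hBmin : ∀ i, (p i).comap B.subtype ∈ minimalPrimes B) {b : B} (hb : b ∈ B⁰) :
    (b : A) ∈ A⁰ := by
  refine mem_nonZeroDivisors_iff_forall_notMem_minimalPrimes.mpr fun q hq hbq ↦ ?_
  obtain ⟨i, rfl⟩ := hall q hq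
  exact notMem_nonZeroDivisors_of_mem_mem_minimalPrimes (q := (p i).comap B.subtype) hbq
    (hBmin i) hb

theorem exists_mem_nonZeroDivisors_mul_eq_coe [Fintype ι] [IsReduced A] (hp : ∀ i, (p i).IsPrime)
    (hall : ∀ q ∈ minimalPrimes A, ∃ i, q = p i)
    (hloc : ∀ i, ∀ a : A, ∃ b s : B, (s : A) ∉ p i ∧ s * a - b ∈ p i)
    (hBincomp : ∀ i j, i ≠ j → ¬ (p i).comap B.subtype ≤ (p j).comap B.subtype) (a : A) :
    ∃ s ∈ B⁰, ∃ b : B, s * a = b := by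
  classical
  choose b s hs hsb using fun i ↦ hloc i a
  have hsep : ∀ i, ∃ e : B, (e : A) ∉ p i ∧ ∀ j ≠ i, (e : A) ∈ p j := fun i ↦
    have := (hp i).comap B.subtype
    Ideal.exists_notMem_forall_mem_of_not_le _ i fun j hj ↦ hBincomp j i hj
  choose e he hei using hsep
  have hmem_iff : ∀ k (f : ι → A), ∑ j, (e j : A) * f j ∈ p k ↔ (e k : A) * f k ∈ p k :=
    fun k f ↦ Ideal.sum_mul_mem_iff (p k) f fun j hj ↦ hei j k hj.symm
  refine ⟨∑ i, e i * s i, ?_, ∑ i, e i * b i, ?_⟩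
  · refine mem_nonZeroDivisors_of_injective B.subtype_injective ?_
    refine mem_nonZeroDivisors_iff_forall_notMem_minimalPrimes.mpr fun q hq hmem ↦ ?_
    obtain ⟨k, rfl⟩ := hall q hq
    have hk : (e k : A) * s k ∈ p k := (hmem_iff k _).mp (by simpa using hmem)
    exact ((hp k).mem_or_mem hk).elim (he k) (hs k)
  · refine sub_eq_zero.mp (eq_zero_of_forall_mem_minimalPrimes fun q hq ↦ ?_)
    obtain ⟨k, rfl⟩ := hall q hq
    have hsum : ((∑ i, e i * s i : B) : A) * a - (∑ i, e i * b i : B)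
        = ∑ i, (e i : A) * (s i * a - b i) := by
      push_cast
      rw [Finset.sum_mul, ← Finset.sum_sub_distrib]
      exact Finset.sum_congr rfl fun i _ ↦ by ring
    rw [hsum, hmem_iff]
    exact (p k).mul_mem_left _ (hsb k)

end Subring

theorem stmt_6_general {A : Type*} [CommRing A] [IsReduced A] {n : ℕ} (p : Fin n → Ideal A)
    (hmin : ∀ i, p i ∈ minimalPrimes A)
    (hall : ∀ q ∈ minimalPrimes A, ∃ i, q = p i)
    (B : Subring A)
    (hfield : ∀ i, ∀ x : FractionRing (A ⧸ p i), ∃ b s : B, (s : A) ∉ p i ∧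
        x * algebraMap (A ⧸ p i) (FractionRing (A ⧸ p i))
              (Ideal.Quotient.mk (p i) (s : A)) =
          algebraMap (A ⧸ p i) (FractionRing (A ⧸ p i))
              (Ideal.Quotient.mk (p i) (b : A)))
    (hBincomp : ∀ i j, i ≠ j → ¬ (p i).comap B.subtype ≤ (p j).comap B.subtype)
    (hBall : ∀ Q ∈ minimalPrimes B, ∃ i, Q = (p i).comap B.subtype) :
    (∀ b : B, b ∈ nonZeroDivisors B → (b : A) ∈ nonZeroDivisors A) ∧
    ∃ f : Localization (nonZeroDivisors B) →+* Localization (nonZeroDivisors A),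
      (∀ b : B, f (algebraMap B (Localization (nonZeroDivisors B)) b) =
          algebraMap A (Localization (nonZeroDivisors A)) (b : A)) ∧
      Function.Bijective f := by
  have hp : ∀ i, (p i).IsPrime := fun i ↦ (hmin i).isPrime
  have hBmin := Ideal.mem_minimalPrimes_of_not_le _ (fun i ↦ (hp i).comap B.subtype) hBincomp hBall
  have hnzd : ∀ b : B, b ∈ B⁰ → (b : A) ∈ A⁰ := fun _ ↦ B.coe_mem_nonZeroDivisors hall hBmin
  have hloc : ∀ i, ∀ a : A, ∃ b s : B, (s : A) ∉ p i ∧ s * a - b ∈ p i := fun i a ↦ by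
    obtain ⟨b, s, hs, h⟩ := hfield i (algebraMap _ _ (Ideal.Quotient.mk (p i) a))
    exact ⟨b, s, hs, (Ideal.mul_sub_mem_iff_fractionRing (p i) a s b).mp h⟩
  have : IsFractionRing B (Localization A⁰) :=
    IsFractionRing.of_forall_exists_mul_eq_algebraMap B.subtype_injective hnzd
      (B.exists_mem_nonZeroDivisors_mul_eq_coe hp hall hloc hBincomp)
  let e := IsLocalization.algEquiv B⁰ (Localization B⁰) (Localization A⁰)
  exact ⟨hnzd, e.toRingHom, e.commutes, e.bijective⟩

/-- Let `A` be a reduced commutative ring whose minimal primes are exactly the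
pairwise distinct `p 1, …, p n`, and let `B` be a subring of `A` such that:
(1) for each `i`, the canonical embedding `qf(B/(p i ∩ B)) → qf(A/p i)` is
surjective (expressed below: every element of `qf(A/p i)` is a quotient
`b̄/s̄` with `b, s ∈ B`, `s ∉ p i`); (2) the contractions `p i ∩ B` are pairwise
incomparable; and (3) every minimal prime of `B` has the form `p i ∩ B`.
Then every non zero divisor of `B` is a non zero divisor of `A`, and the
induced canonical ring homomorphism `Quot(B) → Quot(A)` is an isomorphism. -/
theorem stmt_6 {A : Type*} [CommRing A] [IsReduced A] {n : ℕ} (p : Fin n → Ideal A)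
    (hinj : Function.Injective p)
    (hmin : ∀ i, p i ∈ minimalPrimes A)
    (hall : ∀ q ∈ minimalPrimes A, ∃ i, q = p i)
    (B : Subring A)
    (hfield : ∀ i, ∀ x : FractionRing (A ⧸ p i), ∃ b s : B, (s : A) ∉ p i ∧
        x * algebraMap (A ⧸ p i) (FractionRing (A ⧸ p i))
              (Ideal.Quotient.mk (p i) (s : A)) =
          algebraMap (A ⧸ p i) (FractionRing (A ⧸ p i))
              (Ideal.Quotient.mk (p i) (b : A)))
    (hBincomp : ∀ i j, i ≠ j → ¬ (p i).comap B.subtype ≤ (p j).comap B.subtype)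
    (hBall : ∀ Q ∈ minimalPrimes B, ∃ i, Q = (p i).comap B.subtype) :
    (∀ b : B, b ∈ nonZeroDivisors B → (b : A) ∈ nonZeroDivisors A) ∧
    ∃ f : Localization (nonZeroDivisors B) →+* Localization (nonZeroDivisors A),
      (∀ b : B, f (algebraMap B (Localization (nonZeroDivisors B)) b) =
          algebraMap A (Localization (nonZeroDivisors A)) (b : A)) ∧
      Function.Bijective f :=
  stmt_6_general p hmin hall B hfield hBincomp hBall
end
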